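/- Let N ≥ 2 be an integer, R > 0, p > 0, and let f : [0,∞) → ℝ be a C¹, nondecreasing function with f(t) > 0 for all t > 0. Let (u,v) be a positive radial solution of Δu = v^p, Δv = f(|∇u|) on B_R. Then u'(r) > 0 and v'(r) > 0 for all 0 < r < R, and moreover v(r)^p / N ≤ u''(r) ≤ v(r)^p and f(u'(r)) / N ≤ v''(r) ≤ f(u'(r)) for all 0 < r < R. -/

import Mathlib

/-! The flux `r ^ (N - 1) * w'` of a radial function vanishes at the centre and has derivative
`r ^ (N - 1) * Δw`. Hence `Δw > 0` forces `w' > 0`; and if `Δw = g` with `g` nondecreasing, the flux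
stays below `r ^ N * g r / N`, so `w' ≤ r g / N` and `w'' = g - (N - 1) w' / r ≥ g / N`. This is
applied to `u` with `g = v ^ p`, nondecreasing once `v' > 0`, and then to `v` with `g = f (u')`,
nondecreasing once `u'' > 0`. -/

open Set

/-- `(u, v)` is a positive radial solution of `Δu = v^p`, `Δv = f(|∇u|)` on the ball `B_R`,
written in radial coordinates. -/
def IsPositiveRadialSol (N : ℕ) (R p : ℝ) (f : ℝ → ℝ) (u v : ℝ → ℝ) : Prop :=
  ContDiffOn ℝ 2 u (Set.Ico 0 R) ∧ ContDiffOn ℝ 2 v (Set.Ico 0 R) ∧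
  (∀ r ∈ Set.Ico (0:ℝ) R, 0 < u r ∧ 0 < v r) ∧
  deriv u 0 = 0 ∧ deriv v 0 = 0 ∧
  (∀ r ∈ Set.Ioo (0:ℝ) R,
    deriv (deriv u) r + ((N : ℝ) - 1) / r * deriv u r = v r ^ p) ∧
  (∀ r ∈ Set.Ioo (0:ℝ) R,
    deriv (deriv v) r + ((N : ℝ) - 1) / r * deriv v r = f |deriv u r|)

open Filter Topology

lemma ContDiffOn.differentiableOn_deriv {w : ℝ → ℝ} {s t : Set ℝ} (hw : ContDiffOn ℝ 2 w s)
    (ht : IsOpen t) (hts : t ⊆ s) : DifferentiableOn ℝ (deriv w) t :=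
  ((hw.mono hts).deriv_of_isOpen ht (m := 1) (by norm_num)).differentiableOn one_ne_zero

/-- `derivWithin` on `[0, R)` rather than `deriv`, so that the flux is continuous up to `r = 0`,
where `deriv w` may be a junk value. -/
noncomputable def radialFlux (N : ℕ) (R : ℝ) (w : ℝ → ℝ) (r : ℝ) : ℝ :=
  r ^ (N - 1) * derivWithin w (Ico 0 R) r

section radialFlux

variable {N : ℕ} {R r : ℝ} {w g : ℝ → ℝ}

lemma radialFlux_zero (hN : 2 ≤ N) : radialFlux N R w 0 = 0 := by
  simp [radialFlux, zero_pow (by omega : N - 1 ≠ 0)]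

lemma radialFlux_of_mem_Ioo (hr : r ∈ Ioo 0 R) : radialFlux N R w r = r ^ (N - 1) * deriv w r := by
  rw [radialFlux, derivWithin_of_mem_nhds (Ico_mem_nhds_iff.2 hr)]

lemma continuousOn_radialFlux (hw : ContDiffOn ℝ 1 w (Ico 0 R)) :
    ContinuousOn (radialFlux N R w) (Ico 0 R) :=
  (continuous_pow _).continuousOn.mul
    (hw.continuousOn_derivWithin (uniqueDiffOn_Ico 0 R) le_rfl)

lemma hasDerivAt_radialFlux (hN : 1 ≤ N) (hw : ContDiffOn ℝ 2 w (Ico 0 R)) (hr : r ∈ Ioo 0 R) :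
    HasDerivAt (radialFlux N R w)
      (r ^ (N - 1) * (deriv (deriv w) r + ((N : ℝ) - 1) / r * deriv w r)) r := by
  have hflux : radialFlux N R w =ᶠ[𝓝 r] fun t => t ^ (N - 1) * deriv w t :=
    eventually_of_mem (isOpen_Ioo.mem_nhds hr) fun t ht => radialFlux_of_mem_Ioo ht
  have hw' : HasDerivAt (deriv w) (deriv (deriv w) r) r :=
    ((hw.differentiableOn_deriv isOpen_Ioo Ioo_subset_Ico_self).differentiableAt
      (isOpen_Ioo.mem_nhds hr)).hasDerivAt
  refine (((hasDerivAt_pow (N - 1) r).mul hw').congr_of_eventuallyEq hflux).congr_deriv ?_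
  obtain ⟨n, rfl⟩ : ∃ n, N = n + 1 := ⟨N - 1, by omega⟩
  have hr0 : r ≠ 0 := hr.1.ne'
  rcases n with _ | n
  · simp
  · simp only [Nat.add_sub_cancel, Nat.cast_add, Nat.cast_one, add_sub_cancel_right, pow_succ]
    field_simp
    ring

lemma deriv_pos_of_radialLaplacian_pos (hN : 2 ≤ N) (hw : ContDiffOn ℝ 2 w (Ico 0 R))
    (hg : ∀ s ∈ Ioo 0 R, 0 < g s)
    (heq : ∀ s ∈ Ioo 0 R, deriv (deriv w) s + ((N : ℝ) - 1) / s * deriv w s = g s) :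
    ∀ r ∈ Ioo 0 R, 0 < deriv w r := by
  have hmono : StrictMonoOn (radialFlux N R w) (Ico 0 R) := by
    refine strictMonoOn_of_hasDerivWithinAt_pos (convex_Ico 0 R)
      (continuousOn_radialFlux (hw.of_le (by norm_num))) (f' := fun s => s ^ (N - 1) * g s)
      (fun s hs => ?_) (fun s hs => ?_) <;> rw [interior_Ico] at hs
    · rw [← heq s hs]
      exact (hasDerivAt_radialFlux (by omega) hw hs).hasDerivWithinAt
    · exact mul_pos (pow_pos hs.1 _) (hg s hs)
  intro r hr
  have hflux := hmono ⟨le_rfl, hr.1.trans hr.2⟩ (Ioo_subset_Ico_self hr) hr.1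
  rw [radialFlux_zero hN, radialFlux_of_mem_Ioo hr] at hflux
  exact pos_of_mul_pos_right hflux (pow_nonneg hr.1.le _)

lemma deriv_le_of_radialLaplacian_monotoneOn (hN : 2 ≤ N) (hw : ContDiffOn ℝ 2 w (Ico 0 R))
    (hg : MonotoneOn g (Ioo 0 R))
    (heq : ∀ s ∈ Ioo 0 R, deriv (deriv w) s + ((N : ℝ) - 1) / s * deriv w s = g s) :
    ∀ r ∈ Ioo 0 R, deriv w r ≤ r * g r / N := by
  intro r hr
  have hN0 : (N : ℝ) ≠ 0 := by positivity
  have hsub : Icc 0 r ⊆ Ico 0 R := Icc_subset_Ico_right hr.2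
  -- `s ^ N * g r / N` is the flux of `z s = g r * s ^ 2 / (2 * N)`, for which `Δz = g r`
  have hanti : AntitoneOn (fun s => radialFlux N R w s - s ^ N * g r / N) (Icc 0 r) := by
    refine antitoneOn_of_hasDerivWithinAt_nonpos (convex_Icc 0 r)
      (((continuousOn_radialFlux (hw.of_le (by norm_num))).mono hsub).sub (by fun_prop))
      (f' := fun s => s ^ (N - 1) * g s - s ^ (N - 1) * g r)
      (fun s hs => ?_) (fun s hs => ?_) <;> rw [interior_Icc] at hs
    · have hsR : s ∈ Ioo 0 R := ⟨hs.1, hs.2.trans hr.2⟩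
      have hpow := ((hasDerivAt_pow N s).mul_const (g r)).div_const (N : ℝ)
      rw [← heq s hsR]
      refine ((hasDerivAt_radialFlux (by omega) hw hsR).sub hpow).hasDerivWithinAt.congr_deriv ?_
      field_simp
    · have hgs : g s ≤ g r := hg ⟨hs.1, hs.2.trans hr.2⟩ hr hs.2.le
      nlinarith [pow_pos hs.1 (N - 1)]
  have hflux := hanti ⟨le_rfl, hr.1.le⟩ ⟨hr.1.le, le_rfl⟩ hr.1.le
  simp only [radialFlux_zero hN, radialFlux_of_mem_Ioo hr, zero_pow (by omega : N ≠ 0), zero_mul,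
    zero_div, sub_zero, sub_nonpos] at hflux
  have hpowN : r ^ N = r ^ (N - 1) * r := by rw [← pow_succ, Nat.sub_add_cancel (by omega)]
  rw [← mul_le_mul_iff_of_pos_left (pow_pos hr.1 (N - 1))]
  calc r ^ (N - 1) * deriv w r ≤ r ^ N * g r / N := hflux
    _ = r ^ (N - 1) * (r * g r / N) := by rw [hpowN]; ring

lemma second_deriv_bounds_of_radialLaplacian (hN : 2 ≤ N) (hw : ContDiffOn ℝ 2 w (Ico 0 R))
    (hg_pos : ∀ s ∈ Ioo 0 R, 0 < g s) (hg_mono : MonotoneOn g (Ioo 0 R))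
    (heq : ∀ s ∈ Ioo 0 R, deriv (deriv w) s + ((N : ℝ) - 1) / s * deriv w s = g s) :
    ∀ r ∈ Ioo 0 R, g r / N ≤ deriv (deriv w) r ∧ deriv (deriv w) r ≤ g r := by
  intro r hr
  have hw' := deriv_pos_of_radialLaplacian_pos hN hw hg_pos heq r hr
  have hw'_le := deriv_le_of_radialLaplacian_monotoneOn hN hw hg_mono heq r hr
  have hN1 : (1 : ℝ) ≤ N := by exact_mod_cast (by omega : 1 ≤ N)
  have hcoef : 0 ≤ ((N : ℝ) - 1) / r := div_nonneg (sub_nonneg.2 hN1) hr.1.le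
  have hterm : ((N : ℝ) - 1) / r * deriv w r ≤ ((N : ℝ) - 1) / r * (r * g r / N) :=
    mul_le_mul_of_nonneg_left hw'_le hcoef
  have hcancel : ((N : ℝ) - 1) / r * (r * g r / N) = g r - g r / N := by
    field_simp [hr.1.ne']
  constructor <;> linarith [heq r hr, mul_nonneg hcoef hw'.le]

end radialFlux

lemma monotoneOn_Ioo_of_deriv_nonneg {w : ℝ → ℝ} {a b : ℝ} (hw : DifferentiableOn ℝ w (Ioo a b))
    (hw' : ∀ r ∈ Ioo a b, 0 ≤ deriv w r) : MonotoneOn w (Ioo a b) :=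
  monotoneOn_of_deriv_nonneg (convex_Ioo a b) hw.continuousOn (by rwa [interior_Ioo])
    (by rwa [interior_Ioo])

theorem monotonicity_and_second_deriv_bounds_general (N : ℕ) (hN : 2 ≤ N) (R p : ℝ)
    (hp : 0 < p)
    (f : ℝ → ℝ)
    (hfmono : ∀ s t : ℝ, 0 ≤ s → s ≤ t → f s ≤ f t)
    (hfpos : ∀ t : ℝ, 0 < t → 0 < f t)
    (u v : ℝ → ℝ) (huv : IsPositiveRadialSol N R p f u v) :
    ∀ r ∈ Set.Ioo (0:ℝ) R,
      0 < deriv u r ∧ 0 < deriv v r ∧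
      v r ^ p / N ≤ deriv (deriv u) r ∧ deriv (deriv u) r ≤ v r ^ p ∧
      f (deriv u r) / N ≤ deriv (deriv v) r ∧ deriv (deriv v) r ≤ f (deriv u r) := by
  obtain ⟨hu, hv, hpos, -, -, hequ, heqv⟩ := huv
  have hvp_pos (r : ℝ) (hr : r ∈ Ioo 0 R) : 0 < v r ^ p :=
    Real.rpow_pos_of_pos (hpos r (Ioo_subset_Ico_self hr)).2 p
  have hu' := deriv_pos_of_radialLaplacian_pos hN hu hvp_pos hequ
  have hfu_pos (r : ℝ) (hr : r ∈ Ioo 0 R) : 0 < f |deriv u r| := hfpos _ (abs_pos_of_pos (hu' r hr))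
  have hv' := deriv_pos_of_radialLaplacian_pos hN hv hfu_pos heqv
  have hv_mono : MonotoneOn v (Ioo 0 R) :=
    monotoneOn_Ioo_of_deriv_nonneg ((hv.differentiableOn (by norm_num)).mono Ioo_subset_Ico_self)
      fun r hr => (hv' r hr).le
  have hvp_mono : MonotoneOn (fun r => v r ^ p) (Ioo 0 R) := fun a ha b hb hab =>
    Real.rpow_le_rpow (hpos a (Ioo_subset_Ico_self ha)).2.le (hv_mono ha hb hab) hp.le
  have hu'' := second_deriv_bounds_of_radialLaplacian hN hu hvp_pos hvp_mono hequ
  have hu'_mono : MonotoneOn (deriv u) (Ioo 0 R) :=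
    monotoneOn_Ioo_of_deriv_nonneg (hu.differentiableOn_deriv isOpen_Ioo Ioo_subset_Ico_self)
      fun r hr => (div_pos (hvp_pos r hr) (by positivity)).le.trans (hu'' r hr).1
  have hfu_mono : MonotoneOn (fun r => f |deriv u r|) (Ioo 0 R) := fun a ha b hb hab => by
    dsimp only
    rw [abs_of_pos (hu' a ha), abs_of_pos (hu' b hb)]
    exact hfmono _ _ (hu' a ha).le (hu'_mono ha hb hab)
  have hv'' := second_deriv_bounds_of_radialLaplacian hN hv hfu_pos hfu_mono heqv
  intro r hr
  have hv''r := hv'' r hr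
  rw [abs_of_pos (hu' r hr)] at hv''r
  exact ⟨hu' r hr, hv' r hr, (hu'' r hr).1, (hu'' r hr).2, hv''r.1, hv''r.2⟩

/-- For a positive radial solution `(u, v)` of `Δu = v^p`, `Δv = f(|∇u|)` on `B_R`:
`u' > 0`, `v' > 0`, `v^p/N ≤ u'' ≤ v^p` and `f(u')/N ≤ v'' ≤ f(u')` on `(0, R)`. -/
theorem monotonicity_and_second_deriv_bounds (N : ℕ) (hN : 2 ≤ N) (R p : ℝ)
    (hR : 0 < R) (hp : 0 < p)
    (f : ℝ → ℝ) (hf : ContDiffOn ℝ 1 f (Set.Ici 0))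
    (hfmono : ∀ s t : ℝ, 0 ≤ s → s ≤ t → f s ≤ f t)
    (hfpos : ∀ t : ℝ, 0 < t → 0 < f t)
    (u v : ℝ → ℝ) (huv : IsPositiveRadialSol N R p f u v) :
    ∀ r ∈ Set.Ioo (0:ℝ) R,
      0 < deriv u r ∧ 0 < deriv v r ∧
      v r ^ p / N ≤ deriv (deriv u) r ∧ deriv (deriv u) r ≤ v r ^ p ∧
      f (deriv u r) / N ≤ deriv (deriv v) r ∧ deriv (deriv v) r ≤ f (deriv u r) :=
  monotonicity_and_second_deriv_bounds_general N hN R p hp f hfmono hfpos u v huv
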